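/- Let σ₁ be an n×n and σ₂ an m×m complex positive definite matrix, let ρ₁, ρ₂ be nonzero positive semidefinite matrices of matching sizes, and let α > 0 with α ≠ 1 and z > 0. Define Q̃_{α,z}(ρ‖σ) := trace[((σ^{(1−α)/(2z)}) (ρ^{α/z}) (σ^{(1−α)/(2z)}))^z] and D̃_{α,z}(ρ‖σ) := (1/(α−1)) · log( Q̃_{α,z}(ρ‖σ) / trace ρ ). Then D̃_{α,z}(ρ₁ ⊗ₖ ρ₂ ‖ σ₁ ⊗ₖ σ₂) = D̃_{α,z}(ρ₁‖σ₁) + D̃_{α,z}(ρ₂‖σ₂). -/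

import Mathlib

/-! If `A = U D Uᴴ` and `B = V E Vᴴ` diagonalise two positive semidefinite matrices, then
`A ⊗ₖ B` is diagonalised by the unitary `U ⊗ₖ V` with the products of their eigenvalues, and
`(λμ)^r = λ^r μ^r` for `λ, μ ≥ 0`; so real powers, the sandwich `σ^s ρ^a σ^s` and its `z`-th power
all factor over `⊗ₖ`. The trace is multiplicative on Kronecker products, hence so are `Q̃_{α,z}`
and `trace ρ`, and the logarithm turns the product into a sum because both quotients are
positive: `σ^s` is invertible, so the sandwich of the nonzero `ρ^a` is nonzero. -/

open Matrix Kronecker ComplexOrder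

/-- The `r`-th power of a complex square matrix, obtained via the (real) continuous
functional calculus applied to `t ↦ t ^ r` (real `rpow`, so that `0 ^ r = 0` for `r ≠ 0`). -/
noncomputable def matRpow {k : Type*} [Fintype k] [DecidableEq k]
    (A : Matrix k k ℂ) (r : ℝ) : Matrix k k ℂ :=
  cfc (fun x : ℝ => x ^ r) A

/-- The absolute value `|A| := (Aᴴ · A)^{1/2}` of a complex square matrix, where the square
root is taken via the continuous functional calculus. -/
noncomputable def matAbs {k : Type*} [Fintype k] [DecidableEq k]
    (A : Matrix k k ℂ) : Matrix k k ℂ :=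
  matRpow (Aᴴ * A) (1 / 2 : ℝ)

/-- The α-z-Rényi quantity `Q̃_{α,z}(ρ‖σ) = trace[((σ^{(1−α)/(2z)}) (ρ^{α/z}) (σ^{(1−α)/(2z)}))^z]`
(a real number, read off as the real part of the trace of a positive semidefinite matrix). -/
noncomputable def renyiQ {k : Type*} [Fintype k] [DecidableEq k]
    (α z : ℝ) (ρ σ : Matrix k k ℂ) : ℝ :=
  ((matRpow (matRpow σ ((1 - α) / (2 * z)) * matRpow ρ (α / z)
      * matRpow σ ((1 - α) / (2 * z))) z).trace).re

/-- The α-z-Rényi divergence `D̃_{α,z}(ρ‖σ) = (1/(α−1)) · log(Q̃_{α,z}(ρ‖σ) / trace ρ)`. -/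
noncomputable def renyiD {k : Type*} [Fintype k] [DecidableEq k]
    (α z : ℝ) (ρ σ : Matrix k k ℂ) : ℝ :=
  (1 / (α - 1)) * Real.log (renyiQ α z ρ σ / (ρ.trace).re)

namespace Matrix

section Kronecker

variable {k k' : Type*} [Fintype k] [Fintype k']

theorem mul_mul_star_kronecker_mul_mul_star {R : Type*} [CommSemiring R] [StarRing R]
    (U A : Matrix k k R) (V B : Matrix k' k' R) :
    (U * A * star U) ⊗ₖ (V * B * star V) = (U ⊗ₖ V) * (A ⊗ₖ B) * star (U ⊗ₖ V) := by
  simp only [star_eq_conjTranspose, conjTranspose_kronecker, mul_kronecker_mul]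

theorem PosSemidef.re_trace_pos {A : Matrix k k ℂ} (hA : A.PosSemidef) (h0 : A ≠ 0) :
    0 < A.trace.re :=
  (Complex.pos_iff.mp (lt_of_le_of_ne hA.trace_nonneg
    (Ne.symm <| hA.trace_eq_zero_iff.not.mpr h0))).1

variable [DecidableEq k] [DecidableEq k']

theorem IsHermitian.re_trace_kronecker {A : Matrix k k ℂ} {B : Matrix k' k' ℂ}
    (hA : A.IsHermitian) (hB : B.IsHermitian) :
    (A ⊗ₖ B).trace.re = A.trace.re * B.trace.re := by
  simp [trace_kronecker, Complex.mul_re, hA.trace_eq_sum_eigenvalues,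
    hB.trace_eq_sum_eigenvalues]

end Kronecker

section FunctionalCalculus

variable {𝕜 : Type*} [RCLike 𝕜] {k k' : Type*} [Fintype k] [DecidableEq k]
  [Fintype k'] [DecidableEq k']

open Unitary Polynomial in
/-- On the finite spectrum, `f` agrees with an interpolating polynomial, and polynomials commute
with conjugation and act entrywise on diagonal matrices. -/
theorem cfc_conjStarAlgAut_diagonal (U : unitary (Matrix k k 𝕜)) (d : k → ℝ) (f : ℝ → ℝ) :
    cfc f (conjStarAlgAut 𝕜 _ U (diagonal (RCLike.ofReal ∘ d))) =
      conjStarAlgAut 𝕜 _ U (diagonal (RCLike.ofReal ∘ f ∘ d)) := by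
  change cfc f (conjStarAlgAut ℝ _ U _) = conjStarAlgAut ℝ _ U _
  have hD : IsSelfAdjoint (diagonal (RCLike.ofReal ∘ d) : Matrix k k 𝕜) :=
    isHermitian_diagonal_iff.mpr fun i => by simp [isSelfAdjoint_iff]
  have hspec : spectrum ℝ (conjStarAlgAut ℝ _ U (diagonal (RCLike.ofReal ∘ d) : Matrix k k 𝕜))
      ⊆ Set.range d := by
    intro x hx
    rw [← spectrum.algebraMap_mem_iff 𝕜, conjStarAlgAut_apply,
      spectrum_star_right_conjugate, spectrum_diagonal] at hx
    simpa using hx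
  obtain ⟨p, hp⟩ := (exists_eval_eq_iff d (f ∘ d)).mpr fun i j h => by simp [h]
  rw [cfc_congr (g := p.eval) fun x hx => by obtain ⟨i, rfl⟩ := hspec hx; exact (hp i).symm,
    cfc_polynomial p _ (hD.map (conjStarAlgAut ℝ _ U)),
    ← diagonalAlgHom_apply ℝ, aeval_algHom_apply, aeval_algHom_apply, aeval_pi_apply,
    diagonalAlgHom_apply]
  congr 3
  ext i
  simp [← RCLike.algebraMap_eq_ofReal, aeval_algebraMap_apply, hp]

variable {A : Matrix k k ℂ}

theorem IsHermitian.matRpow_eq (hA : A.IsHermitian) (r : ℝ) :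
    matRpow A r = Unitary.conjStarAlgAut ℂ _ hA.eigenvectorUnitary
      (diagonal (RCLike.ofReal ∘ (· ^ r) ∘ hA.eigenvalues)) :=
  hA.cfc_eq _

theorem PosSemidef.posSemidef_matRpow (hA : A.PosSemidef) (r : ℝ) :
    (matRpow A r).PosSemidef := by
  rw [hA.isHermitian.matRpow_eq, Unitary.conjStarAlgAut_apply,
    Unitary.isUnit_coe.posSemidef_star_right_conjugate_iff, posSemidef_diagonal_iff]
  intro i
  simpa using Real.rpow_nonneg (hA.eigenvalues_nonneg i) r

theorem PosSemidef.matRpow_ne_zero (hA : A.PosSemidef) (h0 : A ≠ 0) (r : ℝ) :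
    matRpow A r ≠ 0 := by
  rw [hA.isHermitian.matRpow_eq, map_ne_zero_iff _ (EquivLike.injective _), Ne,
    diagonal_eq_zero, ← Ne]
  contrapose! h0
  rw [← hA.isHermitian.eigenvalues_eq_zero_iff]
  funext i
  have := congrFun h0 i
  simp only [Function.comp_apply, Pi.zero_apply, map_eq_zero,
    Real.rpow_eq_zero_iff_of_nonneg (hA.eigenvalues_nonneg i)] at this
  exact this.1

theorem PosDef.isUnit_matRpow (hA : A.PosDef) (r : ℝ) : IsUnit (matRpow A r) := by
  rw [matRpow, isUnit_cfc_iff _ _ (A.finite_real_spectrum.continuousOn _)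
    hA.isHermitian.isSelfAdjoint, hA.isHermitian.spectrum_real_eq_range_eigenvalues]
  rintro _ ⟨i, rfl⟩
  exact (Real.rpow_pos_of_pos (hA.eigenvalues_pos i) r).ne'

theorem matRpow_kronecker {B : Matrix k' k' ℂ} (hA : A.PosSemidef) (hB : B.PosSemidef) (r : ℝ) :
    matRpow (A ⊗ₖ B) r = matRpow A r ⊗ₖ matRpow B r := by
  let W : unitary (Matrix (k × k') (k × k') ℂ) :=
    ⟨_, kronecker_mem_unitary hA.isHermitian.eigenvectorUnitary.2
      hB.isHermitian.eigenvectorUnitary.2⟩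
  have hAB : A ⊗ₖ B = Unitary.conjStarAlgAut ℂ _ W (diagonal (RCLike.ofReal ∘
      fun p => hA.isHermitian.eigenvalues p.1 * hB.isHermitian.eigenvalues p.2)) := by
    conv_lhs => rw [hA.isHermitian.spectral_theorem, hB.isHermitian.spectral_theorem]
    simp only [Unitary.conjStarAlgAut_apply, mul_mul_star_kronecker_mul_mul_star,
      diagonal_kronecker_diagonal]
    congr 3
    funext p
    simp
  rw [hA.isHermitian.matRpow_eq, hB.isHermitian.matRpow_eq, matRpow, hAB,
    cfc_conjStarAlgAut_diagonal]
  simp only [Unitary.conjStarAlgAut_apply, mul_mul_star_kronecker_mul_mul_star,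
    diagonal_kronecker_diagonal]
  congr 3
  funext p
  simp [Real.mul_rpow (hA.eigenvalues_nonneg _) (hB.eigenvalues_nonneg _)]

theorem PosSemidef.matRpow_mul_matRpow_mul_matRpow {σ ρ : Matrix k k ℂ}
    (hσ : σ.PosSemidef) (hρ : ρ.PosSemidef) (s a : ℝ) :
    (matRpow σ s * matRpow ρ a * matRpow σ s).PosSemidef := by
  simpa [(hσ.posSemidef_matRpow s).isHermitian.eq] using
    (hρ.posSemidef_matRpow a).mul_mul_conjTranspose_same (matRpow σ s)

end FunctionalCalculus

end Matrix

section Renyi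

variable {k k' : Type*} [Fintype k] [DecidableEq k] [Fintype k'] [DecidableEq k']

theorem renyiQ_kronecker {σ₁ ρ₁ : Matrix k k ℂ} {σ₂ ρ₂ : Matrix k' k' ℂ}
    (hσ₁ : σ₁.PosSemidef) (hσ₂ : σ₂.PosSemidef) (hρ₁ : ρ₁.PosSemidef) (hρ₂ : ρ₂.PosSemidef)
    (α z : ℝ) :
    renyiQ α z (ρ₁ ⊗ₖ ρ₂) (σ₁ ⊗ₖ σ₂) = renyiQ α z ρ₁ σ₁ * renyiQ α z ρ₂ σ₂ := by
  have hN₁ := hσ₁.matRpow_mul_matRpow_mul_matRpow hρ₁ ((1 - α) / (2 * z)) (α / z)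
  have hN₂ := hσ₂.matRpow_mul_matRpow_mul_matRpow hρ₂ ((1 - α) / (2 * z)) (α / z)
  rw [renyiQ, renyiQ, renyiQ, matRpow_kronecker hσ₁ hσ₂, matRpow_kronecker hρ₁ hρ₂,
    ← mul_kronecker_mul, ← mul_kronecker_mul, matRpow_kronecker hN₁ hN₂,
    (hN₁.posSemidef_matRpow z).isHermitian.re_trace_kronecker
      (hN₂.posSemidef_matRpow z).isHermitian]

theorem renyiQ_pos {σ ρ : Matrix k k ℂ} (hσ : σ.PosDef) (hρ : ρ.PosSemidef) (h0 : ρ ≠ 0)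
    (α z : ℝ) : 0 < renyiQ α z ρ σ := by
  have hN := hσ.posSemidef.matRpow_mul_matRpow_mul_matRpow hρ ((1 - α) / (2 * z)) (α / z)
  have hS := hσ.isUnit_matRpow ((1 - α) / (2 * z))
  have hN0 : matRpow σ ((1 - α) / (2 * z)) * matRpow ρ (α / z) * matRpow σ ((1 - α) / (2 * z))
      ≠ 0 := by
    rw [Ne, hS.mul_left_eq_zero, hS.mul_right_eq_zero]
    exact hρ.matRpow_ne_zero h0 _
  exact (hN.posSemidef_matRpow z).re_trace_pos (hN.matRpow_ne_zero hN0 z)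

end Renyi

theorem renyiD_additive_general {n m : ℕ}
    (σ₁ : Matrix (Fin n) (Fin n) ℂ) (σ₂ : Matrix (Fin m) (Fin m) ℂ)
    (ρ₁ : Matrix (Fin n) (Fin n) ℂ) (ρ₂ : Matrix (Fin m) (Fin m) ℂ)
    (hσ₁ : σ₁.PosDef) (hσ₂ : σ₂.PosDef) (hρ₁ : ρ₁.PosSemidef) (hρ₂ : ρ₂.PosSemidef)
    (hρ₁0 : ρ₁ ≠ 0) (hρ₂0 : ρ₂ ≠ 0)
    (α z : ℝ) :
    renyiD α z (ρ₁ ⊗ₖ ρ₂) (σ₁ ⊗ₖ σ₂) = renyiD α z ρ₁ σ₁ + renyiD α z ρ₂ σ₂ := by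
  have h₁ := div_pos (renyiQ_pos hσ₁ hρ₁ hρ₁0 α z) (hρ₁.re_trace_pos hρ₁0)
  have h₂ := div_pos (renyiQ_pos hσ₂ hρ₂ hρ₂0 α z) (hρ₂.re_trace_pos hρ₂0)
  rw [renyiD, renyiD, renyiD, renyiQ_kronecker hσ₁.posSemidef hσ₂.posSemidef hρ₁ hρ₂,
    hρ₁.isHermitian.re_trace_kronecker hρ₂.isHermitian, mul_div_mul_comm,
    Real.log_mul h₁.ne' h₂.ne', mul_add]

/-- Additivity of the α-z-Rényi divergence under Kronecker products, in the faithful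
(positive definite `σᵢ`) finite-dimensional case. -/
theorem renyiD_additive {n m : ℕ}
    (σ₁ : Matrix (Fin n) (Fin n) ℂ) (σ₂ : Matrix (Fin m) (Fin m) ℂ)
    (ρ₁ : Matrix (Fin n) (Fin n) ℂ) (ρ₂ : Matrix (Fin m) (Fin m) ℂ)
    (hσ₁ : σ₁.PosDef) (hσ₂ : σ₂.PosDef) (hρ₁ : ρ₁.PosSemidef) (hρ₂ : ρ₂.PosSemidef)
    (hρ₁0 : ρ₁ ≠ 0) (hρ₂0 : ρ₂ ≠ 0)
    (α z : ℝ) (hα₀ : 0 < α) (hα₁ : α ≠ 1) (hz : 0 < z) :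
    renyiD α z (ρ₁ ⊗ₖ ρ₂) (σ₁ ⊗ₖ σ₂) = renyiD α z ρ₁ σ₁ + renyiD α z ρ₂ σ₂ :=
  renyiD_additive_general σ₁ σ₂ ρ₁ ρ₂ hσ₁ hσ₂ hρ₁ hρ₂ hρ₁0 hρ₂0 α z
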